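/- Let x_1,…,x_n ∈ ℝ^d be distinct, σ = (1/n) Σ_{i=1}^n δ_{x_i}, and let μ = (1/n) Σ_{j=1}^n δ_{y_j} with y_1,…,y_n ∈ ℝ^d distinct, and p ∈ [1,∞). Then there exists an optimal transport map T^μ : {x_1,…,x_n} → {y_1,…,y_n} with T^μ_*σ = μ and (1/n) Σ_{j=1}^n |x_j − T^μ(x_j)|_p^p = d_Wp^p(σ,μ); and defining the embedding [P(μ)]_j = (T^μ(x_j) − x_j) n^{−1/p} ∈ ℝ^d for j = 1,…,n, one has P(σ) = 0 (taking T^σ = Id) and |P(σ) − P(μ)|_p = d_Wp(σ,μ), where |·|_p is the Euclidean p-norm on (ℝ^d)^n. -/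

import Mathlib

/-! For uniform measures on `n` distinct points, the masses `π {(x i, y j)}` of a coupling `π`
form `1/n` times a doubly stochastic matrix, and the transport cost is linear in that matrix.
By Birkhoff's theorem a linear function on doubly stochastic matrices is minimised at a
permutation matrix, so the optimal cost is attained by a permutation `σ`, i.e. by the transport
map `x j ↦ y (σ j)`. The embedding rescales the displacements of that map by `n^(-1/p)`, so its
`p`-th power norm is exactly the optimal cost. -/

open MeasureTheory Filter Topology

/-- `∑ i, |v i|^p`, the p-th power of the ℓ^p norm on ℝ^k. -/
noncomputable def lpPow (p : ℝ) {k : ℕ} (v : Fin k → ℝ) : ℝ := ∑ i, |v i| ^ p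

/-- `π` is a coupling (transport plan) between `μ` and `ν`. -/
def IsCoupling {α β : Type*} [MeasurableSpace α] [MeasurableSpace β]
    (π : Measure (α × β)) (μ : Measure α) (ν : Measure β) : Prop :=
  π.map Prod.fst = μ ∧ π.map Prod.snd = ν

/-- The Kantorovich optimal transport cost for a cost function `c`. -/
noncomputable def OTCost {α β : Type*} [MeasurableSpace α] [MeasurableSpace β]
    (c : α → β → ℝ) (μ : Measure α) (ν : Measure β) : ℝ :=
  ⨅ π : {π : Measure (α × β) // IsCoupling π μ ν},
    ∫ z, c z.1 z.2 ∂(π : Measure (α × β))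

/-- The p-Wasserstein distance on ℝ^d with ℓ^p ground cost. -/
noncomputable def dWp (p : ℝ) {d : ℕ} (μ ν : Measure (Fin d → ℝ)) : ℝ :=
  (OTCost (fun x y => lpPow p (x - y)) μ ν) ^ (1 / p)

/-- The uniform discrete (empirical) measure `(1/n) ∑ᵢ δ_{x i}`. -/
noncomputable def uniformOn {d n : ℕ} (x : Fin n → (Fin d → ℝ)) : Measure (Fin d → ℝ) :=
  (n : ENNReal)⁻¹ • ∑ i, Measure.dirac (x i)

/-- The linear embedding of a discrete measure via a transport map `T` (given by its
values on the support points): `[P(μ)]_j = (T(x_j) − x_j) n^{−1/p}`. -/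
noncomputable def discEmbed (p : ℝ) {d n : ℕ} (x T : Fin n → (Fin d → ℝ)) :
    Fin n → (Fin d → ℝ) :=
  fun j => ((n : ℝ) ^ (-(1 / p))) • (T j - x j)

/-- The Euclidean ℓ^p norm of a block vector in `(ℝ^d)^n`. -/
noncomputable def blockNormP (p : ℝ) {d n : ℕ} (z : Fin n → (Fin d → ℝ)) : ℝ :=
  (∑ j, lpPow p (z j)) ^ (1 / p)

open Function Finset

section DoublyStochastic

variable {ι : Type*} [Fintype ι] [DecidableEq ι]

lemma sum_permMatrix_mul (σ : Equiv.Perm ι) (C : Matrix ι ι ℝ) :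
    ∑ i, ∑ j, σ.permMatrix ℝ i j * C i j = ∑ i, C i (σ i) := by
  simp [Equiv.Perm.permMatrix, PEquiv.toMatrix_apply, ite_mul]

lemma exists_perm_sum_le_of_mem_doublyStochastic {M : Matrix ι ι ℝ}
    (hM : M ∈ doublyStochastic ℝ ι) (C : Matrix ι ι ℝ) :
    ∃ σ : Equiv.Perm ι, ∑ i, C i (σ i) ≤ ∑ i, ∑ j, M i j * C i j := by
  let L : Matrix ι ι ℝ →ₗ[ℝ] ℝ :=
    { toFun := fun A => ∑ i, ∑ j, A i j * C i j
      map_add' := fun A B => by simp [add_mul, sum_add_distrib]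
      map_smul' := fun a A => by simp [mul_sum, mul_assoc] }
  rw [← SetLike.mem_coe, doublyStochastic_eq_convexHull_permMatrix] at hM
  obtain ⟨_, ⟨σ, rfl⟩, hσ⟩ :=
    (L.concaveOn convex_univ).exists_le_of_mem_convexHull (Set.subset_univ _) hM
  exact ⟨σ, (sum_permMatrix_mul σ C).symm.trans_le hσ⟩

end DoublyStochastic

section FiniteSupport

variable {α β : Type*} [MeasurableSpace α] [MeasurableSingletonClass α]
  [MeasurableSpace β] [MeasurableSingletonClass β]

lemma integral_eq_sum_of_ae_mem_range {E : Type*} [NormedAddCommGroup E] [NormedSpace ℝ E]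
    [CompleteSpace E] {κ : Type*} [Fintype κ] {e : κ → α} (he : Injective e)
    {μ : Measure α} [IsFiniteMeasure μ] (h : ∀ᵐ a ∂μ, a ∈ Set.range e) (f : α → E) :
    ∫ a, f a ∂μ = ∑ k, μ.real {e k} • f (e k) := by
  classical
  have hrange : Set.range e = ↑(univ.image e) := by simp
  rw [integral_eq_setIntegral h, hrange, setIntegral_finset _ IntegrableOn.finset,
    sum_image he.injOn]

variable {ι κ : Type*} [Fintype ι] [Fintype κ] {x : ι → α} {y : κ → β}
  {π : Measure (α × β)} [IsFiniteMeasure π]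

lemma measureReal_fst_preimage_eq_sum (hx : Injective x) (hy : Injective y)
    (h : ∀ᵐ z ∂π, z ∈ Set.range (Prod.map x y)) (i : ι) :
    π.real (Prod.fst ⁻¹' {x i}) = ∑ j, π.real {(x i, y j)} := by
  classical
  rw [← integral_indicator_one (measurable_fst (measurableSet_singleton _)),
    integral_eq_sum_of_ae_mem_range (hx.prodMap hy) h, Fintype.sum_prod_type]
  simp [Set.indicator_apply, hx.eq_iff]

lemma measureReal_snd_preimage_eq_sum (hx : Injective x) (hy : Injective y)
    (h : ∀ᵐ z ∂π, z ∈ Set.range (Prod.map x y)) (j : κ) :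
    π.real (Prod.snd ⁻¹' {y j}) = ∑ i, π.real {(x i, y j)} := by
  classical
  rw [← integral_indicator_one (measurable_snd (measurableSet_singleton _)),
    integral_eq_sum_of_ae_mem_range (hx.prodMap hy) h, Fintype.sum_prod_type]
  simp [Set.indicator_apply, hy.eq_iff]

end FiniteSupport

section Uniform

variable {d n : ℕ} (x : Fin n → (Fin d → ℝ))

instance isFiniteMeasure_uniformOn : IsFiniteMeasure (uniformOn x) := by
  rcases eq_or_ne n 0 with rfl | hn
  · simp only [uniformOn, univ_eq_empty, sum_empty, smul_zero]
    infer_instance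
  · exact Measure.smul_finite _ (ENNReal.inv_ne_top.2 (Nat.cast_ne_zero.2 hn))

lemma uniformOn_comp_perm (σ : Equiv.Perm (Fin n)) : uniformOn (x ∘ σ) = uniformOn x := by
  simp only [uniformOn, comp_apply, Equiv.sum_comp σ (fun i => Measure.dirac (x i))]

lemma ae_uniformOn_mem_range : ∀ᵐ a ∂uniformOn x, a ∈ Set.range x := by
  simp [uniformOn]

variable {x} in
lemma uniformOn_real_singleton (hx : Injective x) (i : Fin n) :
    (uniformOn x).real {x i} = (n : ℝ)⁻¹ := by
  simp [uniformOn, measureReal_def, Set.indicator_apply, hx.eq_iff]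

end Uniform

section IsCoupling

variable {α β : Type*} [MeasurableSpace α] [MeasurableSpace β]
  {π : Measure (α × β)} {μ : Measure α} {ν : Measure β}

lemma IsCoupling.isFiniteMeasure [IsFiniteMeasure μ] (h : IsCoupling π μ ν) :
    IsFiniteMeasure π := by
  have : IsFiniteMeasure (π.map Prod.fst) := h.1 ▸ ‹_›
  exact Measure.isFiniteMeasure_of_map measurable_fst.aemeasurable

lemma IsCoupling.ae_mem_prod {s : Set α} {t : Set β} (h : IsCoupling π μ ν)
    (hs : ∀ᵐ a ∂μ, a ∈ s) (ht : ∀ᵐ b ∂ν, b ∈ t) : ∀ᵐ z ∂π, z ∈ s ×ˢ t := by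
  filter_upwards [ae_of_ae_map measurable_fst.aemeasurable (h.1 ▸ hs),
    ae_of_ae_map measurable_snd.aemeasurable (h.2 ▸ ht)] with z hz₁ hz₂
  exact ⟨hz₁, hz₂⟩

end IsCoupling

section UniformTransport

variable {d n : ℕ} {x y : Fin n → (Fin d → ℝ)}

variable (x y) in
noncomputable def permCoupling (σ : Equiv.Perm (Fin n)) : Measure ((Fin d → ℝ) × (Fin d → ℝ)) :=
  (n : ENNReal)⁻¹ • ∑ i, Measure.dirac (x i, y (σ i))

lemma isCoupling_permCoupling (σ : Equiv.Perm (Fin n)) :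
    IsCoupling (permCoupling x y σ) (uniformOn x) (uniformOn y) := by
  refine ⟨?_, ?_⟩
  · simp [permCoupling, uniformOn, Measure.map_smul,
      Measure.map_finset_sum' measurable_fst.aemeasurable, Measure.map_dirac' measurable_fst]
  · rw [← uniformOn_comp_perm y σ]
    simp [permCoupling, uniformOn, Measure.map_smul,
      Measure.map_finset_sum' measurable_snd.aemeasurable, Measure.map_dirac' measurable_snd]

lemma integral_permCoupling (σ : Equiv.Perm (Fin n)) (c : (Fin d → ℝ) → (Fin d → ℝ) → ℝ) :
    ∫ z, c z.1 z.2 ∂permCoupling x y σ = (n : ℝ)⁻¹ * ∑ i, c (x i) (y (σ i)) := by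
  rw [permCoupling, integral_smul_measure,
    integral_finsetSum_measure fun i _ => integrable_dirac enorm_lt_top]
  simp

lemma exists_perm_le_integral_of_isCoupling (hx : Injective x) (hy : Injective y)
    {π : Measure ((Fin d → ℝ) × (Fin d → ℝ))} (hπ : IsCoupling π (uniformOn x) (uniformOn y))
    (c : (Fin d → ℝ) → (Fin d → ℝ) → ℝ) :
    ∃ σ : Equiv.Perm (Fin n), (n : ℝ)⁻¹ * ∑ i, c (x i) (y (σ i)) ≤ ∫ z, c z.1 z.2 ∂π := by
  have := hπ.isFiniteMeasure
  have hsupp : ∀ᵐ z ∂π, z ∈ Set.range (Prod.map x y) := by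
    rw [Set.range_prodMap]
    exact hπ.ae_mem_prod (ae_uniformOn_mem_range x) (ae_uniformOn_mem_range y)
  have hrow (i : Fin n) : ∑ j, π.real {(x i, y j)} = (n : ℝ)⁻¹ := by
    rw [← measureReal_fst_preimage_eq_sum hx hy hsupp,
      ← map_measureReal_apply measurable_fst (measurableSet_singleton _), hπ.1,
      uniformOn_real_singleton hx]
  have hcol (j : Fin n) : ∑ i, π.real {(x i, y j)} = (n : ℝ)⁻¹ := by
    rw [← measureReal_snd_preimage_eq_sum hx hy hsupp,
      ← map_measureReal_apply measurable_snd (measurableSet_singleton _), hπ.2,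
      uniformOn_real_singleton hy]
  let M : Matrix (Fin n) (Fin n) ℝ := .of fun i j => n * π.real {(x i, y j)}
  have hM : M ∈ doublyStochastic ℝ (Fin n) := by
    refine mem_doublyStochastic_iff_sum.2
      ⟨fun i j => mul_nonneg n.cast_nonneg measureReal_nonneg, fun i => ?_, fun j => ?_⟩
    · have hn : (n : ℝ) ≠ 0 := Nat.cast_ne_zero.2 i.pos.ne'
      simp [M, ← mul_sum, hrow, hn]
    · have hn : (n : ℝ) ≠ 0 := Nat.cast_ne_zero.2 j.pos.ne'
      simp [M, ← mul_sum, hcol, hn]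
  obtain ⟨σ, hσ⟩ := exists_perm_sum_le_of_mem_doublyStochastic hM (.of fun i j => c (x i) (y j))
  refine ⟨σ, ?_⟩
  calc (n : ℝ)⁻¹ * ∑ i, c (x i) (y (σ i))
      ≤ (n : ℝ)⁻¹ * ∑ i, ∑ j, M i j * c (x i) (y j) :=
        mul_le_mul_of_nonneg_left hσ (by positivity)
    _ = ∑ i, ∑ j, π.real {(x i, y j)} * c (x i) (y j) := by
      rw [mul_sum]
      refine sum_congr rfl fun i _ => ?_
      have hn : (n : ℝ) ≠ 0 := Nat.cast_ne_zero.2 i.pos.ne'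
      simp [M, mul_sum, mul_assoc, hn]
    _ = ∫ z, c z.1 z.2 ∂π := by
      rw [integral_eq_sum_of_ae_mem_range (hx.prodMap hy) hsupp, Fintype.sum_prod_type]
      rfl

theorem exists_perm_otCost_uniformOn_eq (hx : Injective x) (hy : Injective y)
    (c : (Fin d → ℝ) → (Fin d → ℝ) → ℝ) :
    ∃ σ : Equiv.Perm (Fin n),
      OTCost c (uniformOn x) (uniformOn y) = (n : ℝ)⁻¹ * ∑ i, c (x i) (y (σ i)) := by
  obtain ⟨σ, hσ⟩ := Finite.exists_min fun σ : Equiv.Perm (Fin n) => ∑ i, c (x i) (y (σ i))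
  have hlow (π : {π // IsCoupling π (uniformOn x) (uniformOn y)}) :
      (n : ℝ)⁻¹ * ∑ i, c (x i) (y (σ i))
        ≤ ∫ z, c z.1 z.2 ∂(π : Measure ((Fin d → ℝ) × (Fin d → ℝ))) := by
    obtain ⟨τ, hτ⟩ := exists_perm_le_integral_of_isCoupling hx hy π.2 c
    exact (mul_le_mul_of_nonneg_left (hσ τ) (by positivity)).trans hτ
  let πσ : {π // IsCoupling π (uniformOn x) (uniformOn y)} :=
    ⟨permCoupling x y σ, isCoupling_permCoupling σ⟩
  have : Nonempty {π // IsCoupling π (uniformOn x) (uniformOn y)} := ⟨πσ⟩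
  refine ⟨σ, le_antisymm ?_ (le_ciInf hlow)⟩
  calc OTCost c (uniformOn x) (uniformOn y)
      ≤ ∫ z, c z.1 z.2 ∂permCoupling x y σ := ciInf_le ⟨_, Set.forall_mem_range.2 hlow⟩ πσ
    _ = _ := integral_permCoupling σ c

end UniformTransport

section Embedding

variable {d n : ℕ} {p : ℝ}

lemma lpPow_nonneg {k : ℕ} (v : Fin k → ℝ) : 0 ≤ lpPow p v :=
  sum_nonneg fun _ _ => Real.rpow_nonneg (abs_nonneg _) _

lemma lpPow_smul {k : ℕ} {a : ℝ} (ha : 0 ≤ a) (v : Fin k → ℝ) :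
    lpPow p (a • v) = a ^ p * lpPow p v := by
  simp only [lpPow, mul_sum, Pi.smul_apply, smul_eq_mul, abs_mul, abs_of_nonneg ha,
    Real.mul_rpow ha (abs_nonneg _)]

lemma discEmbed_self (x : Fin n → (Fin d → ℝ)) : discEmbed p x x = 0 := by
  ext j
  simp [discEmbed]

lemma blockNormP_discEmbed_self_sub (hp : p ≠ 0) (x T : Fin n → (Fin d → ℝ)) :
    blockNormP p (discEmbed p x x - discEmbed p x T)
      = ((n : ℝ)⁻¹ * ∑ j, lpPow p (x j - T j)) ^ (1 / p) := by
  have hscale : ((n : ℝ) ^ (-(1 / p))) ^ p = (n : ℝ)⁻¹ := by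
    rw [← Real.rpow_mul n.cast_nonneg, neg_mul, one_div_mul_cancel hp, Real.rpow_neg_one]
  have hdiff :
      discEmbed p x x - discEmbed p x T = fun j => (n : ℝ) ^ (-(1 / p)) • (x j - T j) := by
    ext j i
    simp only [discEmbed, Pi.sub_apply, Pi.smul_apply, smul_eq_mul]
    ring
  simp only [blockNormP, hdiff, lpPow_smul (Real.rpow_nonneg n.cast_nonneg _), hscale, mul_sum]

end Embedding

theorem linear_wasserstein_discrete_general {d : ℕ} (p : ℝ) (hp1 : 1 ≤ p)
    (n : ℕ) (x y : Fin n → (Fin d → ℝ))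
    (hx : Function.Injective x) (hy : Function.Injective y) :
    ∃ σperm : Equiv.Perm (Fin n),
      uniformOn (fun j => y (σperm j)) = uniformOn y ∧
      (1 / (n : ℝ)) * ∑ j, lpPow p (x j - y (σperm j))
        = dWp p (uniformOn x) (uniformOn y) ^ p ∧
      discEmbed p x x = 0 ∧
      blockNormP p (discEmbed p x x - discEmbed p x (fun j => y (σperm j)))
        = dWp p (uniformOn x) (uniformOn y) := by
  have hp : p ≠ 0 := (zero_lt_one.trans_le hp1).ne'
  obtain ⟨σ, hcost⟩ := exists_perm_otCost_uniformOn_eq hx hy fun a b => lpPow p (a - b)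
  have hdWp : dWp p (uniformOn x) (uniformOn y)
      = ((n : ℝ)⁻¹ * ∑ j, lpPow p (x j - y (σ j))) ^ (1 / p) := by
    rw [dWp, hcost]
  have hcost_nonneg : 0 ≤ (n : ℝ)⁻¹ * ∑ j, lpPow p (x j - y (σ j)) :=
    mul_nonneg (by positivity) (sum_nonneg fun _ _ => lpPow_nonneg _)
  refine ⟨σ, uniformOn_comp_perm y σ, ?_, discEmbed_self x, ?_⟩
  · rw [hdWp, ← Real.rpow_mul hcost_nonneg, one_div_mul_cancel hp, Real.rpow_one, one_div]
  · rw [blockNormP_discEmbed_self_sub hp, hdWp]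

/-- for uniform discrete measures on `n` distinct points an optimal
transport map (a permutation) exists, and the linear Wasserstein embedding
`[P(μ)]_j = (T^μ(x_j) − x_j) n^{−1/p}` satisfies `P(σ) = 0` and
`|P(σ) − P(μ)|_p = d_Wp(σ,μ)`. -/
theorem linear_wasserstein_discrete {d : ℕ} (p : ℝ) (hp1 : 1 ≤ p)
    (n : ℕ) (hn : 0 < n) (x y : Fin n → (Fin d → ℝ))
    (hx : Function.Injective x) (hy : Function.Injective y) :
    ∃ σperm : Equiv.Perm (Fin n),
      uniformOn (fun j => y (σperm j)) = uniformOn y ∧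
      (1 / (n : ℝ)) * ∑ j, lpPow p (x j - y (σperm j))
        = dWp p (uniformOn x) (uniformOn y) ^ p ∧
      discEmbed p x x = 0 ∧
      blockNormP p (discEmbed p x x - discEmbed p x (fun j => y (σperm j)))
        = dWp p (uniformOn x) (uniformOn y) :=
  linear_wasserstein_discrete_general p hp1 n x y hx hy
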